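/- Suppose the Hamiltonian H is L_H-smooth, attains its minimum value 0 at some point x* with ξ(x*) = 0, satisfies the Polyak–Łojasiewicz condition with constant μ > 0 (½‖∇H(x)‖² ≥ μ·H(x) for all x), and satisfies the expected residual condition with constant ρ ≥ 0: (1/n²)∑_{i,j=1}^n ‖∇H_{i,j}(x) − ∇H_{i,j}(x*) − (∇H(x) − ∇H(x*))‖² ≤ 2ρ·H(x) for all x ∈ ℝ^d. Set σ² = (1/n²)∑_{i,j=1}^n ‖∇H_{i,j}(x*)‖². Then for any constant step size γ^k ≡ γ with 0 < γ ≤ μ/(L_H(μ + 2ρ)), the SHGD iterates satisfy E[H(x^k)] ≤ (1 − γμ)^k H(x⁰) + L_H γσ²/μ for all k ≥ 0. -/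

import Mathlib

/-!
SHGD is SGD on H with the unbiased stochastic gradients ∇H_{i,j}, since H is the average of the
H_{i,j}. The descent lemma for the L_H-smooth H bounds the expected value after one step by
H(x) − γ‖∇H(x)‖² + (L_H γ²/2)·E‖∇H_{i,j}(x)‖². As ∇H(x*) = 0, the deviation ∇H_{i,j}(x) − ∇H(x)
is the expected-residual term plus ∇H_{i,j}(x*), so the second moment is at most
‖∇H(x)‖² + 4ρH(x) + 2σ². With the PL inequality and γL_H(μ + 2ρ) ≤ μ this gives the contraction
E[H(x⁺)] ≤ (1 − γμ)H(x) + L_H γ²σ², and unrolling it leaves a geometric series bounded by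
L_H γσ²/μ.
-/

open scoped RealInnerProductSpace BigOperators

noncomputable section

variable {n d1 d2 : ℕ}

/-- The signed gradient field ξᵢ(x) = (∇_{x1} gᵢ(x), −∇_{x2} gᵢ(x)). -/
def xi (g : EuclideanSpace ℝ (Fin d1 ⊕ Fin d2) → ℝ)
    (x : EuclideanSpace ℝ (Fin d1 ⊕ Fin d2)) : EuclideanSpace ℝ (Fin d1 ⊕ Fin d2) :=
  (WithLp.equiv 2 _).symm (Sum.elim
    (fun a => gradient g x (Sum.inl a))
    (fun j => -(gradient g x (Sum.inr j))))

/-- ξ(x) = (1/n) ∑ᵢ ξᵢ(x). -/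
def xiBar (g : Fin n → EuclideanSpace ℝ (Fin d1 ⊕ Fin d2) → ℝ)
    (x : EuclideanSpace ℝ (Fin d1 ⊕ Fin d2)) : EuclideanSpace ℝ (Fin d1 ⊕ Fin d2) :=
  (n : ℝ)⁻¹ • ∑ i, xi (g i) x

/-- The Hamiltonian component H_{i,j}(x) = ½⟨ξᵢ(x), ξⱼ(x)⟩. -/
def HamComp (g : Fin n → EuclideanSpace ℝ (Fin d1 ⊕ Fin d2) → ℝ) (i j : Fin n)
    (x : EuclideanSpace ℝ (Fin d1 ⊕ Fin d2)) : ℝ :=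
  (1 / 2 : ℝ) * ⟪xi (g i) x, xi (g j) x⟫

/-- The Hamiltonian H(x) = ½‖ξ(x)‖². -/
def Ham (g : Fin n → EuclideanSpace ℝ (Fin d1 ⊕ Fin d2) → ℝ)
    (x : EuclideanSpace ℝ (Fin d1 ⊕ Fin d2)) : ℝ :=
  (1 / 2 : ℝ) * ‖xiBar g x‖ ^ 2

/-- `shgdExp g γ t k φ x` is the expectation E[φ(x^{t+k}) | x^t = x] for the SHGD
iteration x^{m+1} = x^m − γ^m ∇H_{i_m,j_m}(x^m) with (i_m, j_m) i.i.d. uniform on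
{1,…,n}².  In particular `shgdExp g γ 0 k φ x⁰ = E[φ(x^k)]`. -/
def shgdExp (g : Fin n → EuclideanSpace ℝ (Fin d1 ⊕ Fin d2) → ℝ) (γ : ℕ → ℝ) :
    ℕ → ℕ → (EuclideanSpace ℝ (Fin d1 ⊕ Fin d2) → ℝ) →
      EuclideanSpace ℝ (Fin d1 ⊕ Fin d2) → ℝ
  | _, 0, φ => φ
  | t, k + 1, φ => fun x => ((n : ℝ) ^ 2)⁻¹ * ∑ i, ∑ j,
      shgdExp g γ (t + 1) k φ (x - γ t • gradient (HamComp g i j) x)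


open scoped Gradient
open Finset

section Averages

variable {E : Type*} [NormedAddCommGroup E] [InnerProductSpace ℝ E]
  {ι : Type*} [Fintype ι] [Nonempty ι]

theorem expect_inner_eq_of_sum_eq_card_smul {w : ι → E} {G : E}
    (hG : ∑ p, w p = (Fintype.card ι : ℝ) • G) (v : E) :
    𝔼 p, ⟪v, w p⟫ = ⟪v, G⟫ := by
  rw [Fintype.expect_eq_sum_div_card, ← inner_sum, hG, real_inner_smul_right,
    mul_div_cancel_left₀ _ (Nat.cast_ne_zero.2 Fintype.card_ne_zero)]

theorem expect_norm_sq_eq_of_sum_eq_card_smul {w : ι → E} {G : E}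
    (hG : ∑ p, w p = (Fintype.card ι : ℝ) • G) :
    𝔼 p, ‖w p‖ ^ 2 = ‖G‖ ^ 2 + 𝔼 p, ‖w p - G‖ ^ 2 := by
  have hsplit : ∀ p, ‖w p‖ ^ 2 = ‖w p - G‖ ^ 2 + 2 * (⟪G, w p⟫ - ‖G‖ ^ 2) + ‖G‖ ^ 2 := by
    intro p
    have h := norm_add_sq_real (w p - G) G
    rwa [sub_add_cancel, inner_sub_left, real_inner_self_eq_norm_sq, real_inner_comm] at h
  simp only [hsplit, expect_add_distrib, ← mul_expect, expect_sub_distrib,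
    expect_inner_eq_of_sum_eq_card_smul hG, Fintype.expect_const, real_inner_self_eq_norm_sq]
  ring

theorem expect_norm_sq_le_of_sub_eq_add {w a c : ι → E} {G : E}
    (hG : ∑ p, w p = (Fintype.card ι : ℝ) • G) (hwac : ∀ p, w p - G = a p + c p) :
    𝔼 p, ‖w p‖ ^ 2 ≤ ‖G‖ ^ 2 + 2 * 𝔼 p, ‖a p‖ ^ 2 + 2 * 𝔼 p, ‖c p‖ ^ 2 := by
  have hac : ∀ p, ‖a p + c p‖ ^ 2 ≤ 2 * ‖a p‖ ^ 2 + 2 * ‖c p‖ ^ 2 := fun p =>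
    calc ‖a p + c p‖ ^ 2 ≤ (‖a p‖ + ‖c p‖) ^ 2 := by gcongr; exact norm_add_le _ _
      _ ≤ 2 * ‖a p‖ ^ 2 + 2 * ‖c p‖ ^ 2 := by nlinarith [sq_nonneg (‖a p‖ - ‖c p‖)]
  rw [expect_norm_sq_eq_of_sum_eq_card_smul hG, add_assoc, mul_expect, mul_expect,
    ← expect_add_distrib]
  gcongr with p
  rw [hwac]
  exact hac p

end Averages

section Smooth

variable {E : Type*} [NormedAddCommGroup E] [InnerProductSpace ℝ E] [CompleteSpace E]
  {f : E → ℝ} {L : ℝ}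

theorem le_add_inner_gradient_add_sq_of_gradient_lipschitz (hf : Differentiable ℝ f)
    (hL : ∀ x y, ‖∇ f x - ∇ f y‖ ≤ L * ‖x - y‖) (x y : E) :
    f y ≤ f x + ⟪∇ f x, y - x⟫ + L / 2 * ‖y - x‖ ^ 2 := by
  set v := y - x
  set φ : ℝ → ℝ := fun t => f (x + t • v) - t * ⟪∇ f x, v⟫ - L / 2 * ‖v‖ ^ 2 * t ^ 2
  have hφ : ∀ t, HasDerivAt φ (⟪∇ f (x + t • v) - ∇ f x, v⟫ - L * ‖v‖ ^ 2 * t) t := by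
    intro t
    have hline : HasDerivAt (fun t : ℝ => f (x + t • v)) ⟪∇ f (x + t • v), v⟫ t := by
      rw [inner_gradient_left]
      exact (hf _).hasFDerivAt.comp_hasDerivAt t
        (((hasDerivAt_id t).smul_const v).const_add x |>.congr_deriv (one_smul ℝ v))
    refine ((hline.sub (hasDerivAt_mul_const ⟪∇ f x, v⟫)).sub
      ((hasDerivAt_pow 2 t).const_mul (L / 2 * ‖v‖ ^ 2))).congr_deriv ?_
    rw [inner_sub_left]
    ring
  have hφ'_nonpos : ∀ t : ℝ, 0 ≤ t → ⟪∇ f (x + t • v) - ∇ f x, v⟫ - L * ‖v‖ ^ 2 * t ≤ 0 := by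
    intro t ht
    have := hL (x + t • v) x
    rw [add_sub_cancel_left, norm_smul, Real.norm_of_nonneg ht] at this
    nlinarith [real_inner_le_norm (∇ f (x + t • v) - ∇ f x) v,
      mul_le_mul_of_nonneg_right this (norm_nonneg v)]
  have hanti : AntitoneOn φ (Set.Icc 0 1) :=
    antitoneOn_of_hasDerivWithinAt_nonpos (convex_Icc 0 1)
      (fun t _ => (hφ t).continuousAt.continuousWithinAt)
      (fun t _ => (hφ t).hasDerivWithinAt)
      (fun t ht => hφ'_nonpos t (by rw [interior_Icc] at ht; exact ht.1.le))
  have h10 := hanti (by norm_num) (by norm_num) zero_le_one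
  simp only [φ, v, one_smul, zero_smul, add_zero, add_sub_cancel] at h10
  linarith

theorem sq_norm_gradient_le_of_gradient_lipschitz (hf : Differentiable ℝ f)
    (hL : ∀ x y, ‖∇ f x - ∇ f y‖ ≤ L * ‖x - y‖) (hL0 : 0 < L) (hf0 : ∀ x, 0 ≤ f x) (x : E) :
    ‖∇ f x‖ ^ 2 ≤ 2 * L * f x := by
  have h := le_add_inner_gradient_add_sq_of_gradient_lipschitz hf hL x (x - L⁻¹ • ∇ f x)
  rw [sub_sub_cancel_left, inner_neg_right, norm_neg, real_inner_smul_right,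
    real_inner_self_eq_norm_sq, norm_smul, Real.norm_of_nonneg (inv_nonneg.2 hL0.le)] at h
  have hfy := hf0 (x - L⁻¹ • ∇ f x)
  have h1 : L * (L⁻¹ * ‖∇ f x‖ ^ 2) = ‖∇ f x‖ ^ 2 := by field_simp
  have h2 : L * (L / 2 * (L⁻¹ * ‖∇ f x‖) ^ 2) = ‖∇ f x‖ ^ 2 / 2 := by field_simp
  nlinarith [mul_le_mul_of_nonneg_left h hL0.le]

theorem eq_zero_of_polyakLojasiewicz_of_lt (hf : Differentiable ℝ f)
    (hL : ∀ x y, ‖∇ f x - ∇ f y‖ ≤ L * ‖x - y‖) (hL0 : 0 < L) (hf0 : ∀ x, 0 ≤ f x) {μ : ℝ}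
    (hPL : ∀ x, μ * f x ≤ 1 / 2 * ‖∇ f x‖ ^ 2) (hLμ : L < μ) (x : E) : f x = 0 := by
  have := sq_norm_gradient_le_of_gradient_lipschitz hf hL hL0 hf0 x
  nlinarith [hPL x, hf0 x]

theorem IsLocalMin.gradient_eq_zero {a : E} (h : IsLocalMin f a) : ∇ f a = 0 := by
  rw [gradient, h.fderiv_eq_zero, map_zero]

theorem differentiable_gradient_of_contDiff (hf : ContDiff ℝ 2 f) : Differentiable ℝ (∇ f) :=
  ((InnerProductSpace.toDual ℝ E).symm.toContinuousLinearEquiv.contDiff.comp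
    (hf.fderiv_right (m := 1) le_rfl)).differentiable one_ne_zero

theorem hasGradientAt_expect {ι : Type*} [Fintype ι] {f : ι → E → ℝ} {x : E}
    (hf : ∀ p, DifferentiableAt ℝ (f p) x) :
    HasGradientAt (fun y => 𝔼 p, f p y) ((Fintype.card ι : ℝ)⁻¹ • ∑ p, ∇ (f p) x) x := by
  simp only [Fintype.expect_eq_sum_div_card, div_eq_inv_mul]
  rw [hasGradientAt_iff_hasFDerivAt, map_smul, map_sum]
  exact (HasFDerivAt.fun_sum fun p _ =>
    hasGradientAt_iff_hasFDerivAt.1 (hf p).hasGradientAt).const_mul _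

theorem expect_le_of_sum_eq_card_smul_gradient {ι : Type*} [Fintype ι] [Nonempty ι]
    (hf : Differentiable ℝ f) (hL : ∀ x y, ‖∇ f x - ∇ f y‖ ≤ L * ‖x - y‖) {x : E} {w : ι → E}
    (hw : ∑ p, w p = (Fintype.card ι : ℝ) • ∇ f x) {γ : ℝ} (hγ : 0 ≤ γ) :
    𝔼 p, f (x - γ • w p) ≤ f x - γ * ‖∇ f x‖ ^ 2 + L / 2 * γ ^ 2 * 𝔼 p, ‖w p‖ ^ 2 := by
  have hdesc : ∀ p, f (x - γ • w p) ≤ f x - γ * ⟪∇ f x, w p⟫ + L / 2 * γ ^ 2 * ‖w p‖ ^ 2 := by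
    intro p
    have h := le_add_inner_gradient_add_sq_of_gradient_lipschitz hf hL x (x - γ • w p)
    rwa [sub_sub_cancel_left, inner_neg_right, norm_neg, real_inner_smul_right, norm_smul,
      Real.norm_of_nonneg hγ, mul_pow, ← sub_eq_add_neg, ← mul_assoc] at h
  calc 𝔼 p, f (x - γ • w p)
      ≤ 𝔼 p, (f x - γ * ⟪∇ f x, w p⟫ + L / 2 * γ ^ 2 * ‖w p‖ ^ 2) :=
        expect_le_expect fun p _ => hdesc p
    _ = f x - γ * ‖∇ f x‖ ^ 2 + L / 2 * γ ^ 2 * 𝔼 p, ‖w p‖ ^ 2 := by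
        rw [expect_add_distrib, expect_sub_distrib, ← mul_expect, ← mul_expect,
          expect_inner_eq_of_sum_eq_card_smul hw, Fintype.expect_const,
          real_inner_self_eq_norm_sq]

theorem expect_le_of_polyakLojasiewicz_of_expectedResidual {ι : Type*} [Fintype ι]
    [Nonempty ι] {f : ι → E → ℝ} {F : E → ℝ} (hf : ∀ p, Differentiable ℝ (f p))
    (hF : ∀ x, F x = 𝔼 p, f p x) (hL : ∀ x y, ‖∇ F x - ∇ F y‖ ≤ L * ‖x - y‖) (hL0 : 0 ≤ L)
    (hF0 : ∀ x, 0 ≤ F x) {xstar : E} (hstar : ∇ F xstar = 0) {μ : ℝ} (hμ : 0 < μ)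
    (hPL : ∀ x, μ * F x ≤ 1 / 2 * ‖∇ F x‖ ^ 2) {ρ : ℝ} (hρ : 0 ≤ ρ)
    (hER : ∀ x, 𝔼 p, ‖∇ (f p) x - ∇ (f p) xstar - (∇ F x - ∇ F xstar)‖ ^ 2 ≤ 2 * ρ * F x)
    {γ : ℝ} (hγ0 : 0 ≤ γ) (hγ : γ * L * (μ + 2 * ρ) ≤ μ) (x : E) :
    𝔼 p, F (x - γ • ∇ (f p) x) ≤ (1 - γ * μ) * F x + L * γ ^ 2 * 𝔼 p, ‖∇ (f p) xstar‖ ^ 2 := by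
  have hgradF : ∀ y, HasGradientAt F ((Fintype.card ι : ℝ)⁻¹ • ∑ p, ∇ (f p) y) y := by
    rw [funext hF]
    exact fun y => hasGradientAt_expect fun p => hf p y
  have hsum : ∀ y, ∑ p, ∇ (f p) y = (Fintype.card ι : ℝ) • ∇ F y := fun y => by
    rw [(hgradF y).gradient, smul_inv_smul₀ (Nat.cast_ne_zero.2 Fintype.card_ne_zero)]
  have hdesc := expect_le_of_sum_eq_card_smul_gradient (fun y => (hgradF y).differentiableAt)
    hL (hsum x) hγ0
  have hmoment : 𝔼 p, ‖∇ (f p) x‖ ^ 2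
      ≤ ‖∇ F x‖ ^ 2 + 2 * (2 * ρ * F x) + 2 * 𝔼 p, ‖∇ (f p) xstar‖ ^ 2 := by
    refine (expect_norm_sq_le_of_sub_eq_add (hsum x) fun p => ?_).trans (by gcongr; exact hER x)
    rw [hstar, sub_zero]
    abel
  have hγL : γ * L ≤ 1 := by nlinarith [mul_nonneg hγ0 hL0]
  have hPLx := hPL x
  have hFx := hF0 x
  calc 𝔼 p, F (x - γ • ∇ (f p) x)
      ≤ F x - γ * ‖∇ F x‖ ^ 2 + L / 2 * γ ^ 2 * 𝔼 p, ‖∇ (f p) x‖ ^ 2 := hdesc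
    _ ≤ F x - γ * ‖∇ F x‖ ^ 2
        + L / 2 * γ ^ 2 * (‖∇ F x‖ ^ 2 + 2 * (2 * ρ * F x) + 2 * 𝔼 p, ‖∇ (f p) xstar‖ ^ 2) := by
      gcongr
    _ = F x - γ * (1 - γ * L / 2) * ‖∇ F x‖ ^ 2 + 2 * γ ^ 2 * L * ρ * F x
        + L * γ ^ 2 * 𝔼 p, ‖∇ (f p) xstar‖ ^ 2 := by ring
    _ ≤ F x - γ * (1 - γ * L / 2) * (2 * μ * F x) + 2 * γ ^ 2 * L * ρ * F x
        + L * γ ^ 2 * 𝔼 p, ‖∇ (f p) xstar‖ ^ 2 := by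
      gcongr
      · nlinarith
      · linarith
    _ ≤ (1 - γ * μ) * F x + L * γ ^ 2 * 𝔼 p, ‖∇ (f p) xstar‖ ^ 2 := by
      nlinarith [mul_nonneg hγ0 hFx]

end Smooth

section SHGD

variable {g : Fin n → EuclideanSpace ℝ (Fin d1 ⊕ Fin d2) → ℝ}

theorem differentiable_xi {f : EuclideanSpace ℝ (Fin d1 ⊕ Fin d2) → ℝ} (hf : ContDiff ℝ 2 f) :
    Differentiable ℝ (xi f) := by
  have hgrad := (differentiable_piLp 2).1 (differentiable_gradient_of_contDiff hf)
  refine (differentiable_piLp 2).2 ?_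
  rintro (a | b)
  · exact hgrad (Sum.inl a)
  · exact (hgrad (Sum.inr b)).neg

theorem differentiable_HamComp (hg : ∀ i, ContDiff ℝ 2 (g i)) (i j : Fin n) :
    Differentiable ℝ (HamComp g i j) :=
  ((differentiable_xi (hg i)).inner ℝ (differentiable_xi (hg j))).const_mul _

theorem Ham_nonneg (g : Fin n → EuclideanSpace ℝ (Fin d1 ⊕ Fin d2) → ℝ)
    (x : EuclideanSpace ℝ (Fin d1 ⊕ Fin d2)) : 0 ≤ Ham g x := by
  unfold Ham
  positivity

theorem inv_sq_mul_sum_sum_eq_expect (u : Fin n → Fin n → ℝ) :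
    ((n : ℝ) ^ 2)⁻¹ * ∑ i, ∑ j, u i j = 𝔼 p : Fin n × Fin n, u p.1 p.2 := by
  rw [Fintype.expect_eq_sum_div_card, Fintype.sum_prod_type', Fintype.card_prod,
    Fintype.card_fin]
  push_cast
  ring

theorem Ham_eq_expect (g : Fin n → EuclideanSpace ℝ (Fin d1 ⊕ Fin d2) → ℝ)
    (x : EuclideanSpace ℝ (Fin d1 ⊕ Fin d2)) :
    Ham g x = 𝔼 p : Fin n × Fin n, HamComp g p.1 p.2 x := by
  rw [← inv_sq_mul_sum_sum_eq_expect (fun i j => HamComp g i j x), Ham,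
    ← real_inner_self_eq_norm_sq, xiBar, real_inner_smul_left, real_inner_smul_right, sum_inner]
  simp only [inner_sum, HamComp, Finset.mul_sum]
  exact sum_congr rfl fun i _ => sum_congr rfl fun j _ => by ring

theorem differentiable_Ham (hg : ∀ i, ContDiff ℝ 2 (g i)) : Differentiable ℝ (Ham g) :=
  fun x => by
    have h := (hasGradientAt_expect fun p : Fin n × Fin n =>
      differentiable_HamComp hg p.1 p.2 x).differentiableAt
    rwa [← funext (Ham_eq_expect g)] at h

theorem shgdExp_le_of_step (hn : 0 < n) {φ : EuclideanSpace ℝ (Fin d1 ⊕ Fin d2) → ℝ}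
    {γ r C : ℝ} (hr : 0 ≤ r)
    (hstep : ∀ x, ((n : ℝ) ^ 2)⁻¹ * ∑ i, ∑ j, φ (x - γ • ∇ (HamComp g i j) x) ≤ r * φ x + C)
    (t k : ℕ) (x : EuclideanSpace ℝ (Fin d1 ⊕ Fin d2)) :
    shgdExp g (fun _ => γ) t k φ x ≤ r ^ k * φ x + C * ∑ i ∈ range k, r ^ i := by
  have : NeZero n := ⟨hn.ne'⟩
  induction k generalizing t x with
  | zero => simp [shgdExp]
  | succ k ih =>
    calc shgdExp g (fun _ => γ) t (k + 1) φ x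
        = ((n : ℝ) ^ 2)⁻¹ * ∑ i, ∑ j,
            shgdExp g (fun _ => γ) (t + 1) k φ (x - γ • ∇ (HamComp g i j) x) := rfl
      _ ≤ ((n : ℝ) ^ 2)⁻¹ * ∑ i, ∑ j,
            (r ^ k * φ (x - γ • ∇ (HamComp g i j) x) + C * ∑ i ∈ range k, r ^ i) := by
        gcongr with i _ j _
        exact ih _ _
      _ = r ^ k * (((n : ℝ) ^ 2)⁻¹ * ∑ i, ∑ j, φ (x - γ • ∇ (HamComp g i j) x))
            + C * ∑ i ∈ range k, r ^ i := by
        rw [inv_sq_mul_sum_sum_eq_expect, inv_sq_mul_sum_sum_eq_expect, expect_add_distrib,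
          ← mul_expect, Fintype.expect_const]
      _ ≤ r ^ k * (r * φ x + C) + C * ∑ i ∈ range k, r ^ i := by
        gcongr
        exact hstep x
      _ = r ^ (k + 1) * φ x + C * ∑ i ∈ range (k + 1), r ^ i := by
        rw [sum_range_succ]
        ring

end SHGD

theorem shgd_constant_stepsize_PL_general
    (hn : 0 < n) (g : Fin n → EuclideanSpace ℝ (Fin d1 ⊕ Fin d2) → ℝ)
    (hg : ∀ i, ContDiff ℝ 2 (g i))
    (LH : ℝ)
    -- H is L_H-smooth
    (hsmooth : ∀ x y, ‖gradient (Ham g) x - gradient (Ham g) y‖ ≤ LH * ‖x - y‖)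
    (xstar : EuclideanSpace ℝ (Fin d1 ⊕ Fin d2))
    -- H attains its minimum value 0 at x*, with ξ(x*) = 0
    (hH0 : Ham g xstar = 0)
    (μ : ℝ) (hμ : 0 < μ)
    -- PL condition
    (hPL : ∀ x, μ * Ham g x ≤ (1 / 2 : ℝ) * ‖gradient (Ham g) x‖ ^ 2)
    (ρ : ℝ) (hρ : 0 ≤ ρ)
    -- expected residual condition
    (hER : ∀ x, ((n : ℝ) ^ 2)⁻¹ * ∑ i, ∑ j,
        ‖gradient (HamComp g i j) x - gradient (HamComp g i j) xstar
          - (gradient (Ham g) x - gradient (Ham g) xstar)‖ ^ 2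
      ≤ 2 * ρ * Ham g x)
    (σ2 : ℝ)
    (hσ2 : σ2 = ((n : ℝ) ^ 2)⁻¹ * ∑ i, ∑ j, ‖gradient (HamComp g i j) xstar‖ ^ 2)
    (γ : ℝ) (hγ0 : 0 < γ) (hγ : γ ≤ μ / (LH * (μ + 2 * ρ)))
    (x0 : EuclideanSpace ℝ (Fin d1 ⊕ Fin d2)) :
    ∀ k : ℕ, shgdExp g (fun _ => γ) 0 k (Ham g) x0
      ≤ (1 - γ * μ) ^ k * Ham g x0 + LH * γ * σ2 / μ := by
  intro k
  have : NeZero n := ⟨hn.ne'⟩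
  have hLH : 0 < LH := by
    have h := hγ0.trans_le hγ
    rw [div_pos_iff_of_pos_left hμ] at h
    exact pos_of_mul_pos_left h (by linarith)
  have hγL : γ * LH * (μ + 2 * ρ) ≤ μ := by
    rwa [le_div_iff₀ (by positivity), ← mul_assoc] at hγ
  have hσ2_nonneg : 0 ≤ σ2 := hσ2 ▸ by positivity
  have hstar : gradient (Ham g) xstar = 0 :=
    IsLocalMin.gradient_eq_zero (Filter.Eventually.of_forall fun y => hH0 ▸ Ham_nonneg g y)
  have hstep : ∀ x, ((n : ℝ) ^ 2)⁻¹ * ∑ i, ∑ j, Ham g (x - γ • gradient (HamComp g i j) x)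
      ≤ (1 - γ * μ) * Ham g x + LH * γ ^ 2 * σ2 := by
    simp only [inv_sq_mul_sum_sum_eq_expect] at hER hσ2 ⊢
    have hdiff : ∀ p : Fin n × Fin n, Differentiable ℝ (HamComp g p.1 p.2) :=
      fun p => differentiable_HamComp hg p.1 p.2
    rw [hσ2]
    exact expect_le_of_polyakLojasiewicz_of_expectedResidual hdiff (Ham_eq_expect g) hsmooth
      hLH.le (Ham_nonneg g) hstar hμ hPL hρ hER hγ0.le hγL
  -- For γμ > 1 the contraction factor 1 - γμ is negative and cannot be iterated; but then
  -- μ > L_H, which forces H ≡ 0.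
  rcases le_or_gt (γ * μ) 1 with hγμ | hγμ
  · have hgeom : ∑ i ∈ range k, (1 - γ * μ) ^ i ≤ 1 / (γ * μ) := by
      simpa [← range_eq_Ico] using geom_sum_Ico_le_of_lt_one (m := 0) (n := k)
        (sub_nonneg.2 hγμ) (by nlinarith [mul_pos hγ0 hμ])
    calc shgdExp g (fun _ => γ) 0 k (Ham g) x0
        ≤ (1 - γ * μ) ^ k * Ham g x0 + LH * γ ^ 2 * σ2 * ∑ i ∈ range k, (1 - γ * μ) ^ i :=
          shgdExp_le_of_step hn (sub_nonneg.2 hγμ) hstep 0 k x0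
      _ ≤ (1 - γ * μ) ^ k * Ham g x0 + LH * γ ^ 2 * σ2 * (1 / (γ * μ)) := by gcongr
      _ = (1 - γ * μ) ^ k * Ham g x0 + LH * γ * σ2 / μ := by field_simp
  · have hLHμ : LH < μ := by nlinarith [mul_pos hγ0 hLH]
    have hH := eq_zero_of_polyakLojasiewicz_of_lt (differentiable_Ham hg) hsmooth hLH
      (Ham_nonneg g) hPL hLHμ
    have := shgdExp_le_of_step (g := g) (φ := Ham g) (γ := γ) (r := 0) (C := 0) hn le_rfl
      (fun x => by simp [hH]) 0 k x0
    rw [hH] at this ⊢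
    simp only [mul_zero, zero_mul, add_zero, zero_add] at this ⊢
    exact this.trans (by positivity)

theorem shgd_constant_stepsize_PL
    (hn : 0 < n) (g : Fin n → EuclideanSpace ℝ (Fin d1 ⊕ Fin d2) → ℝ)
    (hg : ∀ i, ContDiff ℝ 2 (g i))
    (LH : ℝ)
    -- H is L_H-smooth
    (hsmooth : ∀ x y, ‖gradient (Ham g) x - gradient (Ham g) y‖ ≤ LH * ‖x - y‖)
    (xstar : EuclideanSpace ℝ (Fin d1 ⊕ Fin d2))
    -- H attains its minimum value 0 at x*, with ξ(x*) = 0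
    (hstat : xiBar g xstar = 0) (hH0 : Ham g xstar = 0)
    (hmin : ∀ y, Ham g xstar ≤ Ham g y)
    (μ : ℝ) (hμ : 0 < μ)
    -- PL condition
    (hPL : ∀ x, μ * Ham g x ≤ (1 / 2 : ℝ) * ‖gradient (Ham g) x‖ ^ 2)
    (ρ : ℝ) (hρ : 0 ≤ ρ)
    -- expected residual condition
    (hER : ∀ x, ((n : ℝ) ^ 2)⁻¹ * ∑ i, ∑ j,
        ‖gradient (HamComp g i j) x - gradient (HamComp g i j) xstar
          - (gradient (Ham g) x - gradient (Ham g) xstar)‖ ^ 2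
      ≤ 2 * ρ * Ham g x)
    (σ2 : ℝ)
    (hσ2 : σ2 = ((n : ℝ) ^ 2)⁻¹ * ∑ i, ∑ j, ‖gradient (HamComp g i j) xstar‖ ^ 2)
    (γ : ℝ) (hγ0 : 0 < γ) (hγ : γ ≤ μ / (LH * (μ + 2 * ρ)))
    (x0 : EuclideanSpace ℝ (Fin d1 ⊕ Fin d2)) :
    ∀ k : ℕ, shgdExp g (fun _ => γ) 0 k (Ham g) x0
      ≤ (1 - γ * μ) ^ k * Ham g x0 + LH * γ * σ2 / μ :=
  shgd_constant_stepsize_PL_general hn g hg LH hsmooth xstar hH0 μ hμ hPL ρ hρ hER σ2 hσ2 γ hγ0 hγ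
    x0

end
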